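/- Let Σ₀ ∈ ℝ^{p×p} be symmetric positive semidefinite whose largest eigenvalue Λ₁ is strictly larger than its second largest eigenvalue Λ₂, and whose unit top eigenvector u₁ has at most s nonzero entries. Let Σ̃ ∈ ℝ^{p×p} be symmetric, let μ ≥ 2‖Σ̃ − Σ₀‖_∞, let F̂ be the Fantope SDP estimator with input Σ̃ and tuning parameter μ, and let û₁ be a unit eigenvector of F̂ corresponding to its largest eigenvalue, normalized so that û₁ᵀu₁ ≥ 0. Then there exists a universal constant C > 0 such that ‖û₁ − u₁‖₂² ≤ 4C s² μ² / (Λ₁ − Λ₂)². -/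

import Mathlib

open Matrix Finset

noncomputable section

/-- Euclidean norm on `Fin p → ℝ`. -/
def l2 {p : ℕ} (v : Fin p → ℝ) : ℝ := Real.sqrt (∑ j, v j ^ 2)

/-- Inner product on `Fin p → ℝ`. -/
def dotp {p : ℕ} (v w : Fin p → ℝ) : ℝ := ∑ j, v j * w j

/-- Entrywise sup norm `‖A‖_∞ = max_{j,k} |A_{jk}|`. -/
def msup {p : ℕ} (A : Matrix (Fin p) (Fin p) ℝ) : ℝ := ⨆ j, ⨆ k, |A j k|

/-- Entrywise ℓ¹ norm `‖A‖₁ = ∑_{j,k} |A_{jk}|`. -/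
def m1 {p : ℕ} (A : Matrix (Fin p) (Fin p) ℝ) : ℝ := ∑ j, ∑ k, |A j k|

/-- The Fantope `{F : F symmetric, 0 ⪯ F ⪯ I, trace F = 1}`. -/
def Fantope (p : ℕ) : Set (Matrix (Fin p) (Fin p) ℝ) :=
  {F | F.IsSymm ∧ F.PosSemidef ∧ (1 - F).PosSemidef ∧ F.trace = 1}

/-- `F` is a Fantope SDP estimator with input `S` and tuning parameter `μ`:
a minimizer of `F ↦ -trace(S F) + μ ‖F‖₁` over the Fantope. -/
def IsFantopeSol {p : ℕ} (S : Matrix (Fin p) (Fin p) ℝ) (μ : ℝ)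
    (F : Matrix (Fin p) (Fin p) ℝ) : Prop :=
  F ∈ Fantope p ∧
    ∀ G ∈ Fantope p, -(S * F).trace + μ * m1 F ≤ -(S * G).trace + μ * m1 G

/-! Write `P = u₁u₁ᵀ` and `Δ = P - F̂`. Since `Σ₀ ⪯ Λ₂ I + (Λ₁ - Λ₂) P` and `0 ⪯ F̂ ⪯ I`, the
Fantope is curved at `P`: `(Λ₁ - Λ₂)/2 ‖Δ‖_F² ≤ ⟨Σ₀, Δ⟩`. Comparing `F̂` with the feasible point
`P`, using `μ ≥ 2‖Σ̃ - Σ₀‖_∞` and the decomposability of the ℓ¹ norm over the `s × s` support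
`S` of `P`, gives `⟨Σ₀, Δ⟩ ≤ (3/2) μ ‖Δ_S‖₁ ≤ (3/2) μ s ‖Δ‖_F`, hence `‖Δ‖_F ≤ 3 s μ/(Λ₁ - Λ₂)`.
Finally `F̂` pairs with `ûûᵀ` at least as well as with `P`, which yields
`‖û - u₁‖² ≤ 2 (1 - (ûᵀu₁)²) ≤ 4 ‖Δ‖_F²`, so `C = 9` works. -/

theorem Finset.sum_abs_sub_sum_abs_le_of_support {ι : Type*} [Fintype ι] [DecidableEq ι]
    {f : ι → ℝ} (g : ι → ℝ) {s : Finset ι} (hf : ∀ i ∉ s, f i = 0) :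
    ∑ i, |f i| - ∑ i, |g i| ≤ ∑ i ∈ s, |f i - g i| - ∑ i ∈ sᶜ, |f i - g i| := by
  rw [← sum_add_sum_compl s fun i => |f i|, ← sum_add_sum_compl s fun i => |g i|]
  have hs : ∑ i ∈ s, |f i| - ∑ i ∈ s, |g i| ≤ ∑ i ∈ s, |f i - g i| := by
    rw [← sum_sub_distrib]
    exact sum_le_sum fun i _ => abs_sub_abs_le_abs_sub _ _
  have hf₀ : ∑ i ∈ sᶜ, |f i| = 0 :=
    sum_eq_zero fun i hi => by rw [hf i (mem_compl.mp hi), abs_zero]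
  have hfg : ∑ i ∈ sᶜ, |f i - g i| = ∑ i ∈ sᶜ, |g i| :=
    sum_congr rfl fun i hi => by rw [hf i (mem_compl.mp hi), zero_sub, abs_neg]
  linarith

namespace Matrix

theorem isSymm_vecMulVec_self {n α : Type*} [CommMagma α] (u : n → α) :
    (vecMulVec u u).IsSymm :=
  transpose_vecMulVec u u

open scoped ComplexOrder in
theorem PosSemidef.trace_mul_nonneg {n 𝕜 : Type*} [Fintype n] [RCLike 𝕜]
    {A B : Matrix n n 𝕜} (hA : A.PosSemidef) (hB : B.PosSemidef) : 0 ≤ (A * B).trace := by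
  classical
  open scoped MatrixOrder in
  obtain ⟨X, rfl⟩ := CStarAlgebra.nonneg_iff_eq_star_mul_self.mp hA.nonneg
  rw [star_eq_conjTranspose, Matrix.mul_assoc, trace_mul_comm]
  exact (hB.mul_mul_conjTranspose_same X).trace_nonneg

variable {n : Type*} [Fintype n]

theorem sq_dotProduct_le (u v : n → ℝ) : (u ⬝ᵥ v) ^ 2 ≤ (u ⬝ᵥ u) * (v ⬝ᵥ v) := by
  simpa only [dotProduct, sq] using sum_mul_sq_le_sq_mul_sq univ u v

theorem dotProduct_sub_self_le {u v : n → ℝ} (hu : u ⬝ᵥ u = 1) (hv : v ⬝ᵥ v = 1)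
    (hvu : 0 ≤ v ⬝ᵥ u) : (v - u) ⬝ᵥ (v - u) ≤ 2 * (1 - (v ⬝ᵥ u) ^ 2) := by
  have h := sq_dotProduct_le v u
  rw [hu, hv, mul_one] at h
  simp only [sub_dotProduct, dotProduct_sub, hu, hv, dotProduct_comm u v]
  nlinarith

theorem trace_transpose_mul_eq_sum (A B : Matrix n n ℝ) :
    (Aᵀ * B).trace = ∑ x : n × n, A x.1 x.2 * B x.1 x.2 := by
  simp only [trace, diag, mul_apply, transpose_apply, Fintype.sum_prod_type]
  exact sum_comm

theorem trace_transpose_mul_self_nonneg (A : Matrix n n ℝ) : 0 ≤ (Aᵀ * A).trace := by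
  rw [trace_transpose_mul_eq_sum]
  exact sum_nonneg fun _ _ => mul_self_nonneg _

theorem trace_transpose_mul_sq_le (A B : Matrix n n ℝ) :
    (Aᵀ * B).trace ^ 2 ≤ (Aᵀ * A).trace * (Bᵀ * B).trace := by
  simp only [trace_transpose_mul_eq_sum, ← sq]
  exact sum_mul_sq_le_sq_mul_sq _ _ _

theorem sq_sum_abs_le_card_sq_mul_trace (A : Matrix n n ℝ) (T : Finset n) :
    (∑ x ∈ T ×ˢ T, |A x.1 x.2|) ^ 2 ≤ (#T : ℝ) ^ 2 * (Aᵀ * A).trace :=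
  calc (∑ x ∈ T ×ˢ T, |A x.1 x.2|) ^ 2
      ≤ #(T ×ˢ T) * ∑ x ∈ T ×ˢ T, |A x.1 x.2| ^ 2 := sq_sum_le_card_mul_sum_sq
    _ ≤ (#T : ℝ) ^ 2 * ∑ x : n × n, A x.1 x.2 * A x.1 x.2 := by
      rw [card_product, Nat.cast_mul, ← sq]
      gcongr
      simp only [sq_abs, ← sq]
      exact sum_le_sum_of_subset_of_nonneg (subset_univ _) fun _ _ _ => sq_nonneg _
    _ = (#T : ℝ) ^ 2 * (Aᵀ * A).trace := by rw [trace_transpose_mul_eq_sum]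

theorem trace_mul_vecMulVec {α : Type*} [CommSemiring α] (M : Matrix n n α) (u v : n → α) :
    (M * vecMulVec u v).trace = (M *ᵥ u) ⬝ᵥ v := by
  rw [mul_vecMulVec]
  rfl

theorem IsSymm.dotProduct_mulVec_comm {α : Type*} [CommSemiring α] {S : Matrix n n α}
    (hS : S.IsSymm) (v w : n → α) :
    v ⬝ᵥ (S *ᵥ w) = w ⬝ᵥ (S *ᵥ v) := by
  rw [dotProduct_mulVec, ← mulVec_transpose, hS.eq, dotProduct_comm]

theorem IsSymm.dotProduct_mulVec_le_of_eigenvector {S : Matrix n n ℝ} (hS : S.IsSymm)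
    {u : n → ℝ} {Λ₁ Λ₂ : ℝ} (hu : u ⬝ᵥ u = 1) (hEig : S *ᵥ u = Λ₁ • u)
    (hΛ₂ : ∀ w, w ⬝ᵥ u = 0 → w ⬝ᵥ (S *ᵥ w) ≤ Λ₂ * (w ⬝ᵥ w)) (w : n → ℝ) :
    w ⬝ᵥ (S *ᵥ w) ≤ Λ₂ * (w ⬝ᵥ w) + (Λ₁ - Λ₂) * (u ⬝ᵥ w) ^ 2 := by
  set a := u ⬝ᵥ w
  have hSu : u ⬝ᵥ (S *ᵥ w) = Λ₁ * a := by
    rw [hS.dotProduct_mulVec_comm, hEig, dotProduct_smul, smul_eq_mul, dotProduct_comm]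
  have horth : (w - a • u) ⬝ᵥ u = 0 := by
    rw [sub_dotProduct, smul_dotProduct, hu, dotProduct_comm, smul_eq_mul, mul_one, sub_self]
  have h := hΛ₂ _ horth
  simp only [mulVec_sub, mulVec_smul, hEig, sub_dotProduct, dotProduct_sub, smul_dotProduct,
    dotProduct_smul, smul_eq_mul, hu, hSu, dotProduct_comm w u] at h
  linarith

theorem one_sub_sq_dotProduct_le_of_top_eigenvector {F : Matrix n n ℝ} {u v : n → ℝ} {ν : ℝ}
    (hF : F.IsSymm) (hu : u ⬝ᵥ u = 1) (hv : v ⬝ᵥ v = 1) (hν : F *ᵥ v = ν • v)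
    (htop : ∀ w, w ⬝ᵥ (F *ᵥ w) ≤ ν * (w ⬝ᵥ w)) :
    1 - (v ⬝ᵥ u) ^ 2 ≤ 2 * ((vecMulVec u u - F) * (vecMulVec u u - F)).trace := by
  set t := v ⬝ᵥ u
  set Δ := vecMulVec u u - F
  set E := vecMulVec u u - vecMulVec v v
  have hΔ : Δᵀ = Δ := (isSymm_vecMulVec_self u).sub hF
  have hE : Eᵀ = E := (isSymm_vecMulVec_self u).sub (isSymm_vecMulVec_self v)
  have hvu : u ⬝ᵥ v = t := dotProduct_comm u v
  have hPE : (vecMulVec u u * E).trace = 1 - t ^ 2 := by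
    simp only [E, Matrix.mul_sub, trace_sub, trace_mul_vecMulVec, vecMulVec_mulVec,
      op_smul_eq_smul, smul_dotProduct, smul_eq_mul, hu, hvu]
    ring
  have hFE : (F * E).trace ≤ 0 := by
    have h := htop u
    rw [hu, dotProduct_comm] at h
    simp only [E, Matrix.mul_sub, trace_sub, trace_mul_vecMulVec, hν, smul_dotProduct,
      smul_eq_mul, hv]
    linarith
  have hEE : (E * E).trace = 2 - 2 * t ^ 2 := by
    simp only [E, Matrix.mul_sub, Matrix.sub_mul, trace_sub, trace_mul_vecMulVec,
      vecMulVec_mulVec, op_smul_eq_smul, smul_dotProduct, smul_eq_mul, hu, hv, hvu,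
      dotProduct_comm v u]
    ring
  have hCS := trace_transpose_mul_sq_le Δ E
  rw [hΔ, hE, hEE] at hCS
  have hD : 0 ≤ (Δ * Δ).trace := by simpa only [hΔ] using trace_transpose_mul_self_nonneg Δ
  have hx : 0 ≤ 1 - t ^ 2 := by simpa [hu, hv] using sq_dotProduct_le v u
  have hy : 1 - t ^ 2 ≤ (Δ * E).trace := by
    rw [Matrix.sub_mul, trace_sub, hPE]
    linarith
  nlinarith [pow_le_pow_left₀ hx hy 2]

end Matrix

section EntrywiseNorms

variable {p : ℕ}

theorem l2_sq (v : Fin p → ℝ) : l2 v ^ 2 = v ⬝ᵥ v := by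
  rw [l2, Real.sq_sqrt (sum_nonneg fun _ _ => sq_nonneg _)]
  simp only [dotProduct, sq]

theorem abs_le_msup (A : Matrix (Fin p) (Fin p) ℝ) (j k : Fin p) : |A j k| ≤ msup A :=
  (le_ciSup (Set.finite_range _).bddAbove k).trans
    (le_ciSup (f := fun j => ⨆ k, |A j k|) (Set.finite_range _).bddAbove j)

theorem msup_nonneg (A : Matrix (Fin p) (Fin p) ℝ) : 0 ≤ msup A :=
  Real.iSup_nonneg fun _ => Real.iSup_nonneg fun _ => abs_nonneg _

theorem m1_eq_sum_prod (A : Matrix (Fin p) (Fin p) ℝ) :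
    m1 A = ∑ x : Fin p × Fin p, |A x.1 x.2| :=
  (Fintype.sum_prod_type fun x => |A x.1 x.2|).symm

theorem abs_trace_mul_le_msup_mul_m1 (A B : Matrix (Fin p) (Fin p) ℝ) :
    |(A * B).trace| ≤ msup A * m1 B := by
  rw [← transpose_transpose A, trace_transpose_mul_eq_sum, transpose_transpose, m1_eq_sum_prod,
    mul_sum]
  refine (abs_sum_le_sum_abs _ _).trans (sum_le_sum fun x _ => ?_)
  rw [abs_mul]
  exact mul_le_mul_of_nonneg_right (abs_le_msup A _ _) (abs_nonneg _)

end EntrywiseNorms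

section Fantope

variable {p : ℕ}

theorem vecMulVec_self_mem_fantope {u : Fin p → ℝ} (hu : u ⬝ᵥ u = 1) :
    vecMulVec u u ∈ Fantope p := by
  have hsymm := isSymm_vecMulVec_self u
  refine ⟨hsymm, by simpa using posSemidef_vecMulVec_self_star u, ?_, hu⟩
  refine .of_dotProduct_mulVec_nonneg (isHermitian_iff_isSymm.mpr (isSymm_one.sub hsymm))
    fun x => ?_
  have hCS := sq_dotProduct_le u x
  rw [star_trivial, sub_mulVec, one_mulVec, vecMulVec_mulVec, dotProduct_sub, op_smul_eq_smul,
    dotProduct_smul, smul_eq_mul, dotProduct_comm x u]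
  nlinarith

theorem trace_mul_self_le_one {F : Matrix (Fin p) (Fin p) ℝ} (hF : F ∈ Fantope p) :
    (F * F).trace ≤ 1 := by
  obtain ⟨-, hF, hIF, htr⟩ := hF
  have h := hF.trace_mul_nonneg hIF
  rwa [Matrix.mul_sub, mul_one, trace_sub, htr, sub_nonneg] at h

theorem curvature_of_mem_fantope {S F : Matrix (Fin p) (Fin p) ℝ} {u : Fin p → ℝ}
    {Λ₁ Λ₂ : ℝ} (hS : S.IsSymm) (hu : u ⬝ᵥ u = 1) (hEig : S *ᵥ u = Λ₁ • u)
    (hΛ₂ : ∀ w, w ⬝ᵥ u = 0 → w ⬝ᵥ (S *ᵥ w) ≤ Λ₂ * (w ⬝ᵥ w)) (hgap : Λ₂ ≤ Λ₁)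
    (hF : F ∈ Fantope p) :
    (Λ₁ - Λ₂) / 2 * ((vecMulVec u u - F) * (vecMulVec u u - F)).trace ≤
      (S * (vecMulVec u u - F)).trace := by
  set P := vecMulVec u u
  have hM : (Λ₂ • 1 + (Λ₁ - Λ₂) • P - S).PosSemidef := by
    refine .of_dotProduct_mulVec_nonneg (isHermitian_iff_isSymm.mpr ?_) fun w => ?_
    · exact ((isSymm_one.smul Λ₂).add ((isSymm_vecMulVec_self u).smul _)).sub hS
    · have h := hS.dotProduct_mulVec_le_of_eigenvector hu hEig hΛ₂ w
      simp only [star_trivial, sub_mulVec, add_mulVec, smul_mulVec, one_mulVec, P,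
        vecMulVec_mulVec, op_smul_eq_smul, dotProduct_sub, dotProduct_add, dotProduct_smul,
        smul_eq_mul, dotProduct_comm w u]
      linarith
  have hMF := hM.trace_mul_nonneg hF.2.1
  rw [Matrix.sub_mul, Matrix.add_mul, trace_sub, trace_add, smul_mul, smul_mul, one_mul,
    trace_smul, trace_smul, hF.2.2.2, smul_eq_mul, smul_eq_mul] at hMF
  have hPP : (P * P).trace = 1 := by
    rw [trace_mul_vecMulVec, vecMulVec_mulVec, hu, MulOpposite.op_one, one_smul, hu]
  have hSP : (S * P).trace = Λ₁ := by
    rw [trace_mul_vecMulVec, hEig, smul_dotProduct, hu, smul_eq_mul, mul_one]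
  have hFF := trace_mul_self_le_one hF
  simp only [Matrix.mul_sub, Matrix.sub_mul, trace_sub]
  rw [hPP, hSP, trace_mul_comm F P]
  linarith [mul_le_mul_of_nonneg_left hFF (sub_nonneg.mpr hgap)]

theorem trace_mul_sub_le_of_isFantopeSol {S₀ St F : Matrix (Fin p) (Fin p) ℝ}
    {u : Fin p → ℝ} {μ : ℝ} {T : Finset (Fin p)} (hu : u ⬝ᵥ u = 1) (hT : ∀ j ∉ T, u j = 0)
    (hμ : 2 * msup (St - S₀) ≤ μ) (hF : IsFantopeSol St μ F) :
    (S₀ * (vecMulVec u u - F)).trace ≤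
      3 / 2 * μ * ∑ x ∈ T ×ˢ T, |(vecMulVec u u - F) x.1 x.2| := by
  set P := vecMulVec u u
  set Δ := P - F
  set a := ∑ x ∈ T ×ˢ T, |Δ x.1 x.2|
  set b := ∑ x ∈ (T ×ˢ T)ᶜ, |Δ x.1 x.2|
  have hμ0 : 0 ≤ μ := (mul_nonneg zero_le_two (msup_nonneg _)).trans hμ
  have hopt : (St * Δ).trace ≤ μ * (m1 P - m1 F) := by
    have h := hF.2 P (vecMulVec_self_mem_fantope hu)
    rw [Matrix.mul_sub, trace_sub]
    linarith
  have hnoise : (S₀ * Δ).trace ≤ (St * Δ).trace + μ / 2 * m1 Δ := by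
    have h := (abs_le.mp (abs_trace_mul_le_msup_mul_m1 (St - S₀) Δ)).1
    rw [Matrix.sub_mul, trace_sub] at h
    have hm1 : 0 ≤ m1 Δ := by rw [m1]; positivity
    linarith [mul_le_mul_of_nonneg_right (show msup (St - S₀) ≤ μ / 2 by linarith) hm1]
  have hsupp : ∀ x ∉ T ×ˢ T, P x.1 x.2 = 0 := fun x hx => by
    rcases not_and_or.mp (mem_product.not.mp hx) with h | h <;>
      simp [P, vecMulVec_apply, hT _ h]
  have hcone : m1 P - m1 F ≤ a - b := by
    rw [m1_eq_sum_prod, m1_eq_sum_prod]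
    exact sum_abs_sub_sum_abs_le_of_support (fun x => F x.1 x.2) hsupp
  have hsplit : m1 Δ = a + b := by
    rw [m1_eq_sum_prod]
    exact (sum_add_sum_compl _ _).symm
  have hb : 0 ≤ μ * b := mul_nonneg hμ0 (sum_nonneg fun _ _ => abs_nonneg _)
  rw [hsplit] at hnoise
  linarith [mul_le_mul_of_nonneg_left hcone hμ0]

theorem trace_sq_sub_le_of_isFantopeSol {S₀ St F : Matrix (Fin p) (Fin p) ℝ} {u : Fin p → ℝ}
    {T : Finset (Fin p)} {s : ℕ} {Λ₁ Λ₂ μ : ℝ} (hS₀ : S₀.IsSymm) (hu : u ⬝ᵥ u = 1)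
    (hEig : S₀ *ᵥ u = Λ₁ • u) (hΛ₂ : ∀ w, w ⬝ᵥ u = 0 → w ⬝ᵥ (S₀ *ᵥ w) ≤ Λ₂ * (w ⬝ᵥ w))
    (hgap : Λ₂ < Λ₁) (hT : ∀ j ∉ T, u j = 0) (hTs : #T ≤ s) (hμ : 2 * msup (St - S₀) ≤ μ)
    (hF : IsFantopeSol St μ F) :
    ((vecMulVec u u - F) * (vecMulVec u u - F)).trace ≤ 9 * s ^ 2 * μ ^ 2 / (Λ₁ - Λ₂) ^ 2 := by
  have hcurv := curvature_of_mem_fantope hS₀ hu hEig hΛ₂ hgap.le hF.1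
  have hbasic := trace_mul_sub_le_of_isFantopeSol hu hT hμ hF
  set Δ := vecMulVec u u - F
  set a := ∑ x ∈ T ×ˢ T, |Δ x.1 x.2|
  set D := (Δ * Δ).trace
  have hΔ : Δᵀ = Δ := (isSymm_vecMulVec_self u).sub hF.1.1
  have hD : 0 ≤ D := by simpa only [hΔ] using trace_transpose_mul_self_nonneg Δ
  have hsparse : a ^ 2 ≤ s ^ 2 * D := by
    have h := Δ.sq_sum_abs_le_card_sq_mul_trace T
    rw [hΔ] at h
    exact h.trans (by gcongr)
  have hμ0 : 0 ≤ μ := (mul_nonneg zero_le_two (msup_nonneg _)).trans hμ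
  have hgD : (Λ₁ - Λ₂) * D ≤ 3 * μ * a := by linarith
  have key : ((Λ₁ - Λ₂) ^ 2 * D) * D ≤ (9 * s ^ 2 * μ ^ 2) * D :=
    calc ((Λ₁ - Λ₂) ^ 2 * D) * D = ((Λ₁ - Λ₂) * D) ^ 2 := by ring
      _ ≤ (3 * μ * a) ^ 2 := pow_le_pow_left₀ (mul_nonneg (sub_nonneg.mpr hgap.le) hD) hgD 2
      _ = 9 * μ ^ 2 * a ^ 2 := by ring
      _ ≤ 9 * μ ^ 2 * (s ^ 2 * D) := by gcongr
      _ = (9 * s ^ 2 * μ ^ 2) * D := by ring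
  rcases hD.eq_or_lt with hD0 | hDpos
  · rw [← hD0]
    positivity
  · rw [le_div_iff₀' (pow_pos (sub_pos.mpr hgap) 2)]
    exact le_of_mul_le_mul_right key hDpos

end Fantope

/-- There is a universal constant `C > 0` such that for every symmetric
psd `S₀` with top eigenvalue `Λ₁`, second largest eigenvalue `Λ₂ < Λ₁` and `s`-sparse unit
top eigenvector `u₁`, every symmetric `Σ̃`, every `μ ≥ 2‖Σ̃ − S₀‖_∞`, every Fantope SDP
solution `Fh`, and every unit top eigenvector `uh` of `Fh` with `uhᵀu₁ ≥ 0`, one has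
`‖uh − u₁‖₂² ≤ 4 C s² μ² / (Λ₁ − Λ₂)²`. -/
theorem fantope_eigenvector_bound :
    ∃ C : ℝ, 0 < C ∧
      ∀ (p s : ℕ) (S₀ St Fh : Matrix (Fin p) (Fin p) ℝ) (u₁ uh : Fin p → ℝ)
        (Λ₁ Λ₂ μ : ℝ),
        S₀.IsSymm → S₀.PosSemidef →
        -- `u₁` is a unit eigenvector of `S₀` for the eigenvalue `Λ₁`
        S₀.mulVec u₁ = Λ₁ • u₁ → l2 u₁ = 1 →
        -- `Λ₁` is the largest eigenvalue of `S₀`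
        (∀ w : Fin p → ℝ, dotp w (S₀.mulVec w) ≤ Λ₁ * dotp w w) →
        -- all other eigenvalues are at most `Λ₂`
        (∀ w : Fin p → ℝ, dotp w u₁ = 0 → dotp w (S₀.mulVec w) ≤ Λ₂ * dotp w w) →
        Λ₂ < Λ₁ →
        -- `u₁` has at most `s` nonzero entries
        ((univ : Finset (Fin p)).filter (fun j => u₁ j ≠ 0)).card ≤ s →
        St.IsSymm → 2 * msup (St - S₀) ≤ μ →
        IsFantopeSol St μ Fh →
        -- `uh` is a unit top eigenvector of `Fh`
        (∃ ν : ℝ, Fh.mulVec uh = ν • uh ∧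
          ∀ w : Fin p → ℝ, dotp w (Fh.mulVec w) ≤ ν * dotp w w) →
        l2 uh = 1 → 0 ≤ dotp uh u₁ →
        l2 (uh - u₁) ^ 2 ≤ 4 * C * (s : ℝ) ^ 2 * μ ^ 2 / (Λ₁ - Λ₂) ^ 2 := by
  refine ⟨9, by norm_num, ?_⟩
  intro p s S₀ St Fh u₁ uh Λ₁ Λ₂ μ hS₀ _ hEig hu₁ _ hΛ₂ hgap hsparse _ hμ hFh hTop huh hpos
  obtain ⟨ν, hν, htop⟩ := hTop
  have hu : u₁ ⬝ᵥ u₁ = 1 := by rw [← l2_sq, hu₁, one_pow]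
  have hv : uh ⬝ᵥ uh = 1 := by rw [← l2_sq, huh, one_pow]
  have hT : ∀ j ∉ univ.filter (fun j => u₁ j ≠ 0), u₁ j = 0 := fun j hj => by simpa using hj
  have hΔ := trace_sq_sub_le_of_isFantopeSol hS₀ hu hEig hΛ₂ hgap hT hsparse hμ hFh
  have hangle := one_sub_sq_dotProduct_le_of_top_eigenvector hFh.1.1 hu hv hν htop
  rw [l2_sq]
  calc (uh - u₁) ⬝ᵥ (uh - u₁) ≤ 2 * (1 - (uh ⬝ᵥ u₁) ^ 2) := dotProduct_sub_self_le hu hv hpos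
    _ ≤ 4 * (9 * s ^ 2 * μ ^ 2 / (Λ₁ - Λ₂) ^ 2) := by linarith
    _ = 4 * 9 * s ^ 2 * μ ^ 2 / (Λ₁ - Λ₂) ^ 2 := by ring
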